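/- arXiv:2207.13940 — 2 statements merged into one kernel-verified Lean document; each statement's English description precedes it below -/
import Mathlib

section
/- Let n, p be integers with n ≥ 1 and p ≥ 1, and let σ be a permutation of {1,…,n} satisfying the Balas–Simonetti condition with parameter p (i + p ≤ j implies σ(i) < σ(j)). Suppose S ⊆ {1,…,n} is nonempty and the image σ(S) is a set of consecutive integers (an interval of positions). Let m = min S and M = max S. Then every integer l with m + p ≤ l ≤ M − p belongs to S. -/
theorem Set.mem_of_ordConnected_image {α β : Type*} [Preorder β] {f : α → β}
    (hf : Function.Injective f) {s : Set α} (hs : (f '' s).OrdConnected) {a b x : α}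
    (ha : a ∈ s) (hb : b ∈ s) (hax : f a ≤ f x) (hxb : f x ≤ f b) : x ∈ s := by
  obtain ⟨y, hy, hyx⟩ := hs.out (mem_image_of_mem f ha) (mem_image_of_mem f hb) ⟨hax, hxb⟩
  exact hf hyx ▸ hy

theorem stmt_2_general (n p : ℕ) (σ : Equiv.Perm (Fin n))
    (hBS : ∀ i j : Fin n, (i : ℕ) + p ≤ (j : ℕ) → (σ i : ℕ) < (σ j : ℕ))
    (S : Finset (Fin n)) (hS : S.Nonempty)
    (hIcc : ∃ a b : Fin n, S.image σ = Finset.Icc a b) :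
    ∀ l : Fin n, (S.min' hS : ℕ) + p ≤ (l : ℕ) → (l : ℕ) + p ≤ (S.max' hS : ℕ) →
      l ∈ S := by
  intro l hml hlM
  obtain ⟨a, b, hab⟩ := hIcc
  have hconn : (σ '' S).OrdConnected := by
    rw [← Finset.coe_image, hab, Finset.coe_Icc]
    exact Set.ordConnected_Icc
  exact Set.mem_of_ordConnected_image σ.injective hconn (S.min'_mem hS) (S.max'_mem hS)
    (Fin.le_iff_val_le_val.mpr (hBS _ _ hml).le) (Fin.le_iff_val_le_val.mpr (hBS _ _ hlM).le)

/-- If σ is a Balas–Simonetti permutation with parameter p and S is a nonempty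
set of indices whose image under σ is an interval of positions, then every
index l with `min S + p ≤ l ≤ max S - p` belongs to S. -/
theorem stmt_2 (n p : ℕ) (hn : 1 ≤ n) (hp : 1 ≤ p) (σ : Equiv.Perm (Fin n))
    (hBS : ∀ i j : Fin n, (i : ℕ) + p ≤ (j : ℕ) → (σ i : ℕ) < (σ j : ℕ))
    (S : Finset (Fin n)) (hS : S.Nonempty)
    (hIcc : ∃ a b : Fin n, S.image σ = Finset.Icc a b) :
    ∀ l : Fin n, (S.min' hS : ℕ) + p ≤ (l : ℕ) → (l : ℕ) + p ≤ (S.max' hS : ℕ) →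
      l ∈ S :=
  stmt_2_general n p σ hBS S hS hIcc
end

section
/- For every integer p ≥ 1, 1 + Σ_{i=1}^{⌊p/2⌋} Σ_{m=i}^{p−i} C(m−1, i−1) · C(p−m, i) = 2^{p−1}. -/
/-!
The inner sum is a Chu–Vandermonde convolution along the upper index,
`∑ⱼ C(j, a) C(n - j, b) = C(n + 1, a + b + 1)`, so it equals `C(p, 2i)`. The left-hand side is
therefore the sum of the even-index binomial coefficients of `p`, and by Pascal's rule these sum
to `∑ₖ C(p - 1, k) = 2 ^ (p - 1)`.
-/

open Finset

namespace Nat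

theorem sum_range_choose_mul_choose (n a b : ℕ) :
    ∑ j ∈ range (n + 1), j.choose a * (n - j).choose b = (n + 1).choose (a + b + 1) := by
  induction n generalizing b with
  | zero =>
    cases a <;> cases b <;> simp <;> exact (choose_eq_zero_of_lt (by omega)).symm
  | succ n ih =>
    cases b with
    | zero =>
      have hockey := ih 0
      simp only [choose_zero_right, mul_one, add_zero] at hockey ⊢
      rw [sum_range_succ, hockey, choose_succ_succ' (n + 1), add_comm]
    | succ b =>
      have pascal : ∀ j ∈ range (n + 1), j.choose a * (n + 1 - j).choose (b + 1)
          = j.choose a * (n - j).choose b + j.choose a * (n - j).choose (b + 1) := by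
        intro j hj
        rw [show n + 1 - j = n - j + 1 by have := mem_range.mp hj; omega, choose_succ_succ,
          mul_add]
      rw [sum_range_succ, Nat.sub_self, choose_zero_succ, mul_zero, add_zero,
        sum_congr rfl pascal, sum_add_distrib, ih b, ih (b + 1), ← add_assoc a b 1,
        ← choose_succ_succ']

theorem sum_range_choose_two_mul (n m : ℕ) :
    ∑ i ∈ range (m + 1), (n + 1).choose (2 * i) = ∑ k ∈ range (2 * m + 1), n.choose k := by
  induction m with
  | zero => simp
  | succ m ih =>
    rw [sum_range_succ, ih, show 2 * (m + 1) = 2 * m + 1 + 1 by ring, choose_succ_succ',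
      sum_range_succ _ (2 * m + 1 + 1), sum_range_succ _ (2 * m + 1)]
    ring

theorem sum_range_choose_two_mul_eq_two_pow (n : ℕ) :
    ∑ i ∈ range ((n + 1) / 2 + 1), (n + 1).choose (2 * i) = 2 ^ n := by
  rw [sum_range_choose_two_mul, ← sum_range_choose n]
  refine (sum_subset (range_subset_range.mpr (by omega)) fun k _ hk => ?_).symm
  exact choose_eq_zero_of_lt (by simpa using hk)

theorem sum_Icc_choose_pred_mul_choose {p i : ℕ} (hi : 1 ≤ i) :
    ∑ m ∈ Icc i (p - i), (m - 1).choose (i - 1) * (p - m).choose i = p.choose (2 * i) := by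
  obtain ⟨a, rfl⟩ := Nat.exists_eq_add_of_le' hi
  rw [Nat.add_sub_cancel]
  cases p with
  | zero => simpa using (choose_eq_zero_of_lt (by omega)).symm
  | succ n =>
    have hsub : Icc (a + 1) (n + 1 - (a + 1)) ⊆ Icc 1 (n + 1) := by
      intro m; simp only [mem_Icc]; omega
    rw [sum_subset hsub fun m hm hm' => ?vanish]
    case vanish =>
      simp only [mem_Icc] at hm hm'
      rcases Nat.lt_or_ge m (a + 1) with h | h
      · rw [choose_eq_zero_of_lt (by omega : m - 1 < a), zero_mul]
      · rw [choose_eq_zero_of_lt (by omega : n + 1 - m < a + 1), mul_zero]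
    rw [show 2 * (a + 1) = a + (a + 1) + 1 by ring, ← sum_range_choose_mul_choose]
    refine sum_nbij' (· - 1) (· + 1) ?_ ?_ ?_ ?_ fun m hm => by
      rw [show n + 1 - m = n - (m - 1) by have := mem_Icc.mp hm; omega]
    all_goals
      intro m hm
      simp only [mem_Icc, mem_range] at hm ⊢
      omega

end Nat

theorem stmt_11_general (p : ℕ) :
    1 + ∑ i ∈ Finset.Icc 1 (p / 2), ∑ m ∈ Finset.Icc i (p - i),
        Nat.choose (m - 1) (i - 1) * Nat.choose (p - m) i
      = 2 ^ (p - 1) := by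
  cases p with
  | zero => simp
  | succ n =>
    rw [sum_congr rfl fun i hi => Nat.sum_Icc_choose_pred_mul_choose (mem_Icc.mp hi).1,
      Nat.add_sub_cancel, ← Nat.sum_range_choose_two_mul_eq_two_pow, range_eq_Ico,
      sum_eq_sum_Ico_succ_bot (by omega), Nat.choose_zero_right, Ico_add_one_right_eq_Icc]

/-- 1 + Σ_{i=1}^{⌊p/2⌋} Σ_{m=i}^{p−i} C(m−1, i−1)·C(p−m, i) = 2^{p−1}. -/
theorem stmt_11 (p : ℕ) (hp : 1 ≤ p) :
    1 + ∑ i ∈ Finset.Icc 1 (p / 2), ∑ m ∈ Finset.Icc i (p - i),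
        Nat.choose (m - 1) (i - 1) * Nat.choose (p - m) i
      = 2 ^ (p - 1) :=
  stmt_11_general p
end
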